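/- arXiv:2411.16022 — 4 statements merged into one kernel-verified Lean document; each statement's English description precedes it below -/
import Mathlib

section
/- Under the stated conditions on the leading and subleading coefficients, the determinant det R(x) is a complex polynomial of degree exactly Np − r; more precisely, the coefficient of x^{Np−r} in det R(x) is the sign of the permutation of {1,…,p} sending i to i+r for i ≤ p−r and i to i−(p−r) for i > p−r (in particular it is nonzero), and all higher coefficients vanish. -/
open Polynomial Finset

lemma aux_coeff_prod {ι : Type*} (s : Finset ι) (f : ι → Polynomial ℂ) (d : ι → ℕ)
    (h : ∀ i ∈ s, (f i).natDegree ≤ d i) :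
    (∏ i ∈ s, f i).coeff (∑ i ∈ s, d i) = ∏ i ∈ s, (f i).coeff (d i) := by
  classical
  induction s using Finset.cons_induction with
  | empty => simp
  | cons a s ha ih =>
    rw [Finset.prod_cons, Finset.sum_cons, Finset.prod_cons,
      Polynomial.coeff_mul_add_eq_of_natDegree_le (h a (Finset.mem_cons_self a s))
        (le_trans (Polynomial.natDegree_prod_le _ _) (Finset.sum_le_sum
          (fun i hi => h i (Finset.mem_cons_of_mem hi)))),
      ih (fun i hi => h i (Finset.mem_cons_of_mem hi))]

open Fin.NatCast Fin.CommRing in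
lemma aux_rot (m r : ℕ) : ∀ i : Fin (m + 1),
    ((finRotate (m + 1)) ^ r) i = i + (r : Fin (m + 1)) := by
  induction r with
  | zero => simp
  | succ r ih =>
    intro i
    rw [pow_succ, Equiv.Perm.mul_apply, finRotate_succ_apply, Nat.cast_succ, ih (i + 1)]
    ring

open Fin.NatCast Fin.CommRing in
lemma aux_rot_val (p r : ℕ) (hp : 0 < p) (hr : r < p) (i : Fin p) :
    (((finRotate p) ^ r) i).val = (i.val + r) % p := by
  obtain ⟨m, rfl⟩ : ∃ m, p = m + 1 := ⟨p - 1, by omega⟩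
  rw [aux_rot m r i, Fin.val_add, Fin.val_natCast, Nat.mod_eq_of_lt hr]

/-- Under the stated conditions on the leading and subleading
coefficients, `det R(x)` is a polynomial of degree exactly `N*p - r`: the
coefficient of `x^(N*p-r)` is the sign of the permutation `i ↦ i + r (mod p)`
(in particular nonzero), and all higher coefficients vanish. -/
theorem degree_det_of_leading_structure
    (p N r : ℕ) (hp : 0 < p) (hN : 0 < N) (hr : r < p)
    (R : ℕ → Matrix (Fin p) (Fin p) ℂ)
    (hRN : ∀ a b : Fin p, R N a b = if b.val = a.val + r then 1 else 0)
    (hRN1 : ∀ a b : Fin p, p - r ≤ a.val → b.val < r →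
      R (N - 1) a b = if a.val = b.val + (p - r) then 1 else 0)
    (Rdet : Polynomial ℂ)
    (hRdet : Rdet = Matrix.det
      (Matrix.of fun a b : Fin p =>
        ∑ l ∈ Finset.range (N + 1), Polynomial.C (R l a b) * Polynomial.X ^ l)) :
    Rdet.coeff (N * p - r) = ((Equiv.Perm.sign ((finRotate p) ^ r) : ℤ) : ℂ) ∧
    Rdet.coeff (N * p - r) ≠ 0 ∧
    (∀ k : ℕ, N * p - r < k → Rdet.coeff k = 0) ∧
    Rdet.natDegree = N * p - r := by
  classical
  set M : Matrix (Fin p) (Fin p) (Polynomial ℂ) := Matrix.of fun a b =>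
    ∑ l ∈ Finset.range (N + 1), Polynomial.C (R l a b) * Polynomial.X ^ l with hM
  -- coefficients of the entries
  have hcoeff : ∀ (a b : Fin p) (k : ℕ), (M a b).coeff k = if k ≤ N then R k a b else 0 := by
    intro a b k
    simp only [hM, Matrix.of_apply, Polynomial.finset_sum_coeff, Polynomial.coeff_C_mul,
      Polynomial.coeff_X_pow, mul_ite, mul_one, mul_zero]
    rw [Finset.sum_ite_eq (Finset.range (N + 1)) k (fun l => R l a b)]
    simp [Finset.mem_range, Nat.lt_succ_iff]
  -- the degree bounds
  set d : Fin p → ℕ := fun a => if a.val < p - r then N else N - 1 with hd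
  have hdle : ∀ a : Fin p, d a ≤ N := by
    intro a; simp only [hd]; split <;> omega
  have hdeg : ∀ a b : Fin p, (M a b).natDegree ≤ d a := by
    intro a b
    rw [Polynomial.natDegree_le_iff_coeff_eq_zero]
    intro k hk
    rw [hcoeff]
    by_cases hkN : k ≤ N
    · have ha : p - r ≤ a.val := by
        by_contra h
        push_neg at h
        simp only [hd] at hk
        rw [if_pos h] at hk
        omega
      have hkeq : k = N := by
        simp only [hd] at hk; split at hk <;> omega
      rw [if_pos hkN, hkeq, hRN]
      have hb := b.isLt
      rw [if_neg (by omega)]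
    · rw [if_neg hkN]
  -- the sum of the degree bounds
  have hsum : ∑ a : Fin p, d a = N * p - r := by
    obtain ⟨s, rfl⟩ : ∃ s, p = r + s := ⟨p - r, by omega⟩
    obtain ⟨m, rfl⟩ : ∃ m, N = m + 1 := ⟨N - 1, by omega⟩
    have h1 : ∑ a : Fin (r + s), d a
        = ∑ i ∈ Finset.range (r + s), (if i < s then m + 1 else m) := by
      rw [← Fin.sum_univ_eq_sum_range (fun i => if i < s then m + 1 else m) (r + s)]
      refine Finset.sum_congr rfl fun a _ => ?_
      simp only [hd, Nat.add_sub_cancel_left, Nat.add_sub_cancel]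
    rw [h1, Finset.range_eq_Ico,
      ← Finset.sum_Ico_consecutive _ (Nat.zero_le s) (by omega : s ≤ r + s)]
    have h2 : ∑ i ∈ Finset.Ico 0 s, (if i < s then m + 1 else m) = s * (m + 1) := by
      rw [Finset.sum_congr rfl (fun i hi => if_pos (Finset.mem_Ico.mp hi).2)]
      rw [Finset.sum_const, Nat.card_Ico, smul_eq_mul, Nat.sub_zero]
    have h3 : ∑ i ∈ Finset.Ico s (r + s), (if i < s then m + 1 else m) = r * m := by
      rw [Finset.sum_congr rfl
        (fun i hi => if_neg (by have := (Finset.mem_Ico.mp hi).1; omega))]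
      rw [Finset.sum_const, Nat.card_Ico, smul_eq_mul, Nat.add_sub_cancel]
    rw [h2, h3]
    have e : (m + 1) * (r + s) = s * (m + 1) + r * m + r := by ring
    omega
  -- expansion of the coefficients of the determinant
  have hco : ∀ k : ℕ, Rdet.coeff k =
      ∑ σ : Equiv.Perm (Fin p),
        ((Equiv.Perm.sign σ : ℤ) : ℂ) * (∏ i, M i (σ i)).coeff k := by
    intro k
    rw [hRdet, ← Matrix.det_transpose, Matrix.det_apply, Polynomial.finset_sum_coeff]
    refine Finset.sum_congr rfl fun σ _ => ?_
    rw [Polynomial.coeff_smul, Units.smul_def, zsmul_eq_mul]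
    congr 1
  -- degree bound for the products
  have hprodeg : ∀ σ : Equiv.Perm (Fin p), (∏ i, M i (σ i)).natDegree ≤ N * p - r := by
    intro σ
    refine le_trans (Polynomial.natDegree_prod_le _ _) ?_
    rw [← hsum]
    exact Finset.sum_le_sum fun i _ => hdeg i (σ i)
  -- vanishing of higher coefficients
  have hvan : ∀ k : ℕ, N * p - r < k → Rdet.coeff k = 0 := by
    intro k hk
    rw [hco k]
    refine Finset.sum_eq_zero fun σ _ => ?_
    rw [Polynomial.coeff_eq_zero_of_natDegree_lt (lt_of_le_of_lt (hprodeg σ) hk), mul_zero]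
  -- the main coefficient
  have key : Rdet.coeff (N * p - r) = ((Equiv.Perm.sign ((finRotate p) ^ r) : ℤ) : ℂ) := by
    rw [hco]
    rw [Finset.sum_eq_single ((finRotate p) ^ r)]
    · -- the value at the rotation
      have h1 : (∏ i, M i (((finRotate p) ^ r) i)).coeff (N * p - r) = 1 := by
        rw [← hsum, aux_coeff_prod _ _ d (fun i _ => hdeg i _)]
        refine Finset.prod_eq_one fun i _ => ?_
        rw [hcoeff, if_pos (hdle i)]
        by_cases hi : i.val < p - r
        · have hv : ((((finRotate p) ^ r)) i).val = i.val + r := by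
            rw [aux_rot_val p r hp hr i, Nat.mod_eq_of_lt (by omega)]
          have hdi : d i = N := by simp only [hd]; rw [if_pos hi]
          rw [hdi, hRN, if_pos hv]
        · have hile := i.isLt
          have hv : ((((finRotate p) ^ r)) i).val = i.val + r - p := by
            rw [aux_rot_val p r hp hr i, Nat.mod_eq_sub_mod (by omega),
              Nat.mod_eq_of_lt (by omega)]
          have hdi : d i = N - 1 := by simp only [hd]; rw [if_neg hi]
          rw [hdi, hRN1 i _ (by omega) (by omega), if_pos (by omega)]
      rw [h1, mul_one]
    · -- all other permutations contribute 0
      intro σ _ hσ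
      have h0 : (∏ i, M i (σ i)).coeff (N * p - r) = 0 := by
        rw [← hsum, aux_coeff_prod _ _ d (fun i _ => hdeg i _)]
        by_contra hne
        have hfac : ∀ i : Fin p, (M i (σ i)).coeff (d i) ≠ 0 := by
          intro i hzero
          exact hne (Finset.prod_eq_zero (Finset.mem_univ i) hzero)
        have hA : ∀ i : Fin p, i.val < p - r → (σ i).val = i.val + r := by
          intro i hi
          have hf := hfac i
          have hdi : d i = N := by simp only [hd]; rw [if_pos hi]
          rw [hcoeff, if_pos (hdle i), hdi, hRN] at hf
          by_contra hc
          rw [if_neg hc] at hf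
          exact hf rfl
        have hB : ∀ i : Fin p, p - r ≤ i.val → (σ i).val < r := by
          intro i hi
          by_contra hge
          push_neg at hge
          have hσlt := (σ i).isLt
          have hjlt : (σ i).val - r < p := by omega
          have hjval : (⟨(σ i).val - r, hjlt⟩ : Fin p).val < p - r := by
            simp only []; omega
          have hσj := hA _ hjval
          have hji : σ ⟨(σ i).val - r, hjlt⟩ = σ i := by
            apply Fin.ext
            rw [hσj]
            simp only []
            omega
          have hj := σ.injective hji
          have := congrArg Fin.val hj
          simp only [] at this
          omega
        have hC : ∀ i : Fin p, p - r ≤ i.val → (σ i).val = i.val + r - p := by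
          intro i hi
          have hb := hB i hi
          have hf := hfac i
          have hdi : d i = N - 1 := by simp only [hd]; rw [if_neg (by omega)]
          rw [hcoeff, if_pos (hdle i), hdi, hRN1 i _ hi hb] at hf
          have hcond : i.val = (σ i).val + (p - r) := by
            by_contra hc
            rw [if_neg hc] at hf
            exact hf rfl
          have := i.isLt
          omega
        apply hσ
        apply Equiv.ext
        intro i
        apply Fin.ext
        have hile := i.isLt
        by_cases hi : i.val < p - r
        · rw [hA i hi, aux_rot_val p r hp hr i, Nat.mod_eq_of_lt (by omega)]
        · rw [hC i (by omega), aux_rot_val p r hp hr i, Nat.mod_eq_sub_mod (by omega),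
            Nat.mod_eq_of_lt (by omega)]
      rw [h0, mul_zero]
    · intro h
      exact absurd (Finset.mem_univ _) h
  have hne : Rdet.coeff (N * p - r) ≠ 0 := by
    rw [key]
    exact Int.cast_ne_zero.mpr (Units.ne_zero _)
  refine ⟨key, hne, hvan, le_antisymm ?_ (Polynomial.le_natDegree_of_ne_zero hne)⟩
  exact Polynomial.natDegree_le_iff_coeff_eq_zero.mpr hvan
end

section
/- For every n ∈ ℕ, all x, y ∈ ℂ, and all a ∈ {1,…,p}, b ∈ {1,…,q}, the Christoffel–Darboux formula holds: (x − y) · K^[n](x,y)_{a,b} = Σ_{i=n+1}^{n+p} Σ_{j=0}^{n} (A_i(x))_a · T(i,j) · (B_j(y))_b − Σ_{i=0}^{n} Σ_{j=n+1}^{n+q} (A_i(x))_a · T(i,j) · (B_j(y))_b. -/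
/-- Christoffel–Darboux formula for mixed multiple orthogonal
polynomials: if `T` is a semi-infinite `(p,q)`-banded matrix and the vector
polynomial sequences `A_n : ℂ → ℂ^p`, `B_n : ℂ → ℂ^q` satisfy the recurrence
relations `Σ_m A_m(x) T(m,n) = x A_n(x)` and `Σ_m T(n,m) B_m(y) = y B_n(y)`,
then for all `n`, `x`, `y`, `a`, `b`:
`(x-y) K^[n](x,y)_{a,b} = Σ_{i=n+1}^{n+p} Σ_{j=0}^{n} A_i(x)_a T(i,j) B_j(y)_b
 - Σ_{i=0}^{n} Σ_{j=n+1}^{n+q} A_i(x)_a T(i,j) B_j(y)_b`. -/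
theorem christoffel_darboux_mixed
    (p q : ℕ) (hp : 0 < p) (hq : 0 < q)
    (T : ℕ → ℕ → ℂ)
    (hT : ∀ n m : ℕ, (m + p < n ∨ n + q < m) → T n m = 0)
    (A : ℕ → ℂ → Fin p → ℂ) (B : ℕ → ℂ → Fin q → ℂ)
    (hApoly : ∀ n a, ∃ P : Polynomial ℂ, ∀ x, A n x a = P.eval x)
    (hBpoly : ∀ n b, ∃ P : Polynomial ℂ, ∀ y, B n y b = P.eval y)
    (hA : ∀ (n : ℕ) (x : ℂ) (a : Fin p),
      ∑ m ∈ Finset.range (n + p + 1), A m x a * T m n = x * A n x a)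
    (hB : ∀ (n : ℕ) (y : ℂ) (b : Fin q),
      ∑ m ∈ Finset.range (n + q + 1), T n m * B m y b = y * B n y b)
    (n : ℕ) (x y : ℂ) (a : Fin p) (b : Fin q) :
    (x - y) * ∑ i ∈ Finset.range (n + 1), A i x a * B i y b =
      (∑ i ∈ Finset.Icc (n + 1) (n + p), ∑ j ∈ Finset.range (n + 1),
        A i x a * T i j * B j y b) -
      (∑ i ∈ Finset.range (n + 1), ∑ j ∈ Finset.Icc (n + 1) (n + q),
        A i x a * T i j * B j y b) := by
  have key1 : ∀ i ∈ Finset.range (n + 1),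
      x * A i x a = ∑ m ∈ Finset.range (n + p + 1), A m x a * T m i := by
    intro i hi
    rw [← hA i x a]
    apply Finset.sum_subset
    · intro m hm
      simp only [Finset.mem_range] at *
      omega
    · intro m hm hm'
      simp only [Finset.mem_range, not_lt] at hm hm'
      rw [hT m i (Or.inl (by omega)), mul_zero]
  have key2 : ∀ i ∈ Finset.range (n + 1),
      y * B i y b = ∑ m ∈ Finset.range (n + q + 1), T i m * B m y b := by
    intro i hi
    rw [← hB i y b]
    apply Finset.sum_subset
    · intro m hm
      simp only [Finset.mem_range] at *
      omega
    · intro m hm hm'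
      simp only [Finset.mem_range, not_lt] at hm hm'
      rw [hT i m (Or.inr (by omega)), zero_mul]
  have lhs_eq : (x - y) * ∑ i ∈ Finset.range (n + 1), A i x a * B i y b =
      (∑ i ∈ Finset.range (n + 1), ∑ m ∈ Finset.range (n + p + 1),
        A m x a * T m i * B i y b)
      - (∑ i ∈ Finset.range (n + 1), ∑ m ∈ Finset.range (n + q + 1),
        A i x a * T i m * B m y b) := by
    rw [sub_mul, Finset.mul_sum, Finset.mul_sum]
    congr 1
    · refine Finset.sum_congr rfl fun i hi => ?_
      rw [← mul_assoc, key1 i hi, Finset.sum_mul]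
    · refine Finset.sum_congr rfl fun i hi => ?_
      rw [show y * (A i x a * B i y b) = A i x a * (y * B i y b) by ring,
        key2 i hi, Finset.mul_sum]
      exact Finset.sum_congr rfl fun m _ => by ring
  have split : ∀ (N : ℕ) (g : ℕ → ℂ), ∑ m ∈ Finset.range (n + N + 1), g m
      = (∑ m ∈ Finset.range (n + 1), g m) + ∑ m ∈ Finset.Icc (n + 1) (n + N), g m := by
    intro N g
    rw [Finset.range_eq_Ico, Finset.range_eq_Ico, ← Finset.Ico_add_one_right_eq_Icc]
    exact (Finset.sum_Ico_consecutive g (m := 0) (n := n + 1) (k := n + N + 1) (by omega) (by omega)).symm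
  rw [lhs_eq]
  have e1 : ∑ i ∈ Finset.range (n + 1), ∑ m ∈ Finset.range (n + p + 1),
      A m x a * T m i * B i y b
      = (∑ i ∈ Finset.range (n + 1), ∑ m ∈ Finset.range (n + 1),
          A m x a * T m i * B i y b)
      + ∑ i ∈ Finset.Icc (n + 1) (n + p), ∑ j ∈ Finset.range (n + 1),
          A i x a * T i j * B j y b := by
    have : ∀ i ∈ Finset.range (n + 1), ∑ m ∈ Finset.range (n + p + 1),
        A m x a * T m i * B i y b
        = (∑ m ∈ Finset.range (n + 1), A m x a * T m i * B i y b)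
        + ∑ m ∈ Finset.Icc (n + 1) (n + p), A m x a * T m i * B i y b :=
      fun i _ => split p _
    rw [Finset.sum_congr rfl this, Finset.sum_add_distrib]
    congr 1
    exact Finset.sum_comm
  have e2 : ∑ i ∈ Finset.range (n + 1), ∑ m ∈ Finset.range (n + q + 1),
      A i x a * T i m * B m y b
      = (∑ i ∈ Finset.range (n + 1), ∑ m ∈ Finset.range (n + 1),
          A i x a * T i m * B m y b)
      + ∑ i ∈ Finset.range (n + 1), ∑ j ∈ Finset.Icc (n + 1) (n + q),
          A i x a * T i j * B j y b := by
    have : ∀ i ∈ Finset.range (n + 1), ∑ m ∈ Finset.range (n + q + 1),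
        A i x a * T i m * B m y b
        = (∑ m ∈ Finset.range (n + 1), A i x a * T i m * B m y b)
        + ∑ m ∈ Finset.Icc (n + 1) (n + q), A i x a * T i m * B m y b :=
      fun i _ => split q _
    rw [Finset.sum_congr rfl this, Finset.sum_add_distrib]
  have cancel : ∑ i ∈ Finset.range (n + 1), ∑ m ∈ Finset.range (n + 1),
      A m x a * T m i * B i y b
      = ∑ i ∈ Finset.range (n + 1), ∑ m ∈ Finset.range (n + 1),
      A i x a * T i m * B m y b := Finset.sum_comm
  rw [e1, e2, cancel]
  ring
end

section
/- For every n ∈ ℕ, all x, y ∈ ℂ ∖ Δ, and all indices, the following two mixed Christoffel–Darboux formulas hold: (i) (x − y) · Σ_{i=0}^n (C_i(x))_b (B_i(y))_{b'} = Σ_{i=n+1}^{n+p} Σ_{j=0}^{n} ((C_i(x))_b − (C_i(y))_b) · T(i,j) · (B_j(y))_{b'} − Σ_{i=0}^{n} Σ_{j=n+1}^{n+q} ((C_i(x))_b − (C_i(y))_b) · T(i,j) · (B_j(y))_{b'} for all b, b' ∈ {1,…,q}; (ii) (x − y) · Σ_{i=0}^n (A_i(x))_a (D_i(y))_{a'}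 = Σ_{i=0}^{n} Σ_{j=n+1}^{n+q} (A_i(x))_a · T(i,j) · ((D_j(x))_{a'} − (D_j(y))_{a'}) − Σ_{i=n+1}^{n+p} Σ_{j=0}^{n} (A_i(x))_a · T(i,j) · ((D_j(x))_{a'} − (D_j(y))_{a'}) for all a, a' ∈ {1,…,p}. -/
open MeasureTheory

lemma my_integrable_aux (Δ : Set ℝ) (μ : Measure ℝ) [IsFiniteMeasure μ]
    (hμ : μ Δᶜ = 0) (f : ℝ → ℂ) (hf : AEStronglyMeasurable f μ)
    (M : ℝ) (hM : ∀ t ∈ Δ, ‖f t‖ ≤ M) : Integrable f μ := by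
  have hae : ∀ᵐ t ∂μ, t ∈ Δ := by
    rw [MeasureTheory.ae_iff]; exact hμ
  exact (integrable_const M).mono' hf (hae.mono fun t ht => hM t ht)

lemma my_integrable_poly (Δ : Set ℝ) (hΔ : IsCompact Δ) (μ : Measure ℝ) [IsFiniteMeasure μ]
    (hμ : μ Δᶜ = 0) (P : Polynomial ℂ) :
    Integrable (fun t : ℝ => P.eval (t : ℂ)) μ := by
  have hc : Continuous fun t : ℝ => P.eval (t : ℂ) := P.continuous.comp Complex.continuous_ofReal
  obtain ⟨M, hM⟩ := hΔ.exists_bound_of_continuousOn hc.continuousOn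
  exact my_integrable_aux Δ μ hμ _ hc.measurable.aestronglyMeasurable M hM

lemma my_integrable_poly_div (Δ : Set ℝ) (hΔ : IsCompact Δ) (μ : Measure ℝ) [IsFiniteMeasure μ]
    (hμ : μ Δᶜ = 0) (z : ℂ) (hz : ∀ t : ℝ, t ∈ Δ → z ≠ (t : ℂ)) (P : Polynomial ℂ) :
    Integrable (fun t : ℝ => P.eval (t : ℂ) / (z - (t : ℂ))) μ := by
  have hc : Continuous fun t : ℝ => P.eval (t : ℂ) := P.continuous.comp Complex.continuous_ofReal
  have hmeas : Measurable fun t : ℝ => P.eval (t : ℂ) / (z - (t : ℂ)) :=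
    hc.measurable.div (continuous_const.sub Complex.continuous_ofReal).measurable
  have hco : ContinuousOn (fun t : ℝ => P.eval (t : ℂ) / (z - (t : ℂ))) Δ :=
    hc.continuousOn.div (continuous_const.sub Complex.continuous_ofReal).continuousOn
      (fun t ht => sub_ne_zero.2 (hz t ht))
  obtain ⟨M, hM⟩ := hΔ.exists_bound_of_continuousOn hco
  exact my_integrable_aux Δ μ hμ _ hmeas.aestronglyMeasurable M hM

lemma my_cauchy_rec (Δ : Set ℝ) (hΔ : IsCompact Δ) (μ : Measure ℝ) [IsFiniteMeasure μ]
    (hμ : μ Δᶜ = 0) (z : ℂ) (hz : ∀ t : ℝ, t ∈ Δ → z ≠ (t : ℂ))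
    (N : ℕ) (g : ℕ → ℝ → ℂ) (hg : ∀ m, ∃ P : Polynomial ℂ, ∀ t : ℝ, g m t = P.eval (t : ℂ))
    (c : ℕ → ℂ) (h : ℝ → ℂ) (hh : ∃ P : Polynomial ℂ, ∀ t : ℝ, h t = P.eval (t : ℂ))
    (hsum : ∀ t : ℝ, ∑ m ∈ Finset.range N, g m t * c m = (t : ℂ) * h t) :
    ∑ m ∈ Finset.range N, (∫ t : ℝ, g m t / (z - (t : ℂ)) ∂μ) * c m
      = z * (∫ t : ℝ, h t / (z - (t : ℂ)) ∂μ) - ∫ t : ℝ, h t ∂μ := by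
  have hae : ∀ᵐ t ∂μ, t ∈ Δ := by
    rw [MeasureTheory.ae_iff]; exact hμ
  have hint_g : ∀ m, Integrable (fun t : ℝ => g m t / (z - (t : ℂ)) * c m) μ := by
    intro m
    obtain ⟨P, hP⟩ := hg m
    exact ((my_integrable_poly_div Δ hΔ μ hμ z hz P).mul_const (c m)).congr
      (Filter.Eventually.of_forall fun t => by simp only [hP])
  obtain ⟨Ph, hPh⟩ := hh
  have hint_h : Integrable h μ :=
    (my_integrable_poly Δ hΔ μ hμ Ph).congr (Filter.Eventually.of_forall fun t => by simp only [hPh])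
  have hint_hd : Integrable (fun t : ℝ => h t / (z - (t : ℂ))) μ :=
    (my_integrable_poly_div Δ hΔ μ hμ z hz Ph).congr
      (Filter.Eventually.of_forall fun t => by simp only [hPh])
  calc ∑ m ∈ Finset.range N, (∫ t : ℝ, g m t / (z - (t : ℂ)) ∂μ) * c m
      = ∑ m ∈ Finset.range N, ∫ t : ℝ, g m t / (z - (t : ℂ)) * c m ∂μ := by
        refine Finset.sum_congr rfl fun m _ => ?_
        rw [MeasureTheory.integral_mul_const]
    _ = ∫ t : ℝ, ∑ m ∈ Finset.range N, g m t / (z - (t : ℂ)) * c m ∂μ :=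
        (integral_finset_sum _ (fun m _ => hint_g m)).symm
    _ = ∫ t : ℝ, (z * (h t / (z - (t : ℂ))) - h t) ∂μ := by
        refine integral_congr_ae (hae.mono fun t ht => ?_)
        dsimp only
        have hzt : z - (t : ℂ) ≠ 0 := sub_ne_zero.2 (hz t ht)
        have e1 : ∑ m ∈ Finset.range N, g m t / (z - (t : ℂ)) * c m
            = (∑ m ∈ Finset.range N, g m t * c m) / (z - (t : ℂ)) := by
          rw [Finset.sum_div]
          exact Finset.sum_congr rfl fun m _ => by ring
        rw [e1, hsum t]
        field_simp
        ring
    _ = z * (∫ t : ℝ, h t / (z - (t : ℂ)) ∂μ) - ∫ t : ℝ, h t ∂μ := by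
        rw [integral_sub (hint_hd.const_mul z) hint_h, MeasureTheory.integral_const_mul]

lemma my_cd_alg (p q : ℕ) (T : ℕ → ℕ → ℂ)
    (hT : ∀ n m : ℕ, (m + p < n ∨ n + q < m) → T n m = 0)
    (f g h : ℕ → ℂ) (x y : ℂ) (E : ℕ → ℂ)
    (hf : ∀ i, ∑ m ∈ Finset.range (i + p + 1), f m * T m i = x * f i - E i)
    (hg : ∀ i, ∑ m ∈ Finset.range (i + p + 1), g m * T m i = y * g i - E i)
    (hh : ∀ i, ∑ m ∈ Finset.range (i + q + 1), T i m * h m = y * h i)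
    (n : ℕ) :
    (x - y) * ∑ i ∈ Finset.range (n + 1), f i * h i =
      (∑ i ∈ Finset.Icc (n + 1) (n + p), ∑ j ∈ Finset.range (n + 1),
        (f i - g i) * T i j * h j) -
      (∑ i ∈ Finset.range (n + 1), ∑ j ∈ Finset.Icc (n + 1) (n + q),
        (f i - g i) * T i j * h j) := by
  -- extend the recurrences to the big ranges
  have ext : ∀ (F : ℕ → ℂ) (i : ℕ), i ∈ Finset.range (n + 1) →
      ∑ m ∈ Finset.range (n + p + 1), F m * T m i = ∑ m ∈ Finset.range (i + p + 1), F m * T m i := by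
    intro F i hi
    simp only [Finset.mem_range] at hi
    symm
    refine Finset.sum_subset (Finset.range_subset_range.2 (by omega)) ?_
    intro m hm hm2
    simp only [Finset.mem_range] at hm hm2
    rw [hT m i (Or.inl (by omega)), mul_zero]
  have extq : ∀ (i : ℕ), i ∈ Finset.range (n + 1) →
      ∑ m ∈ Finset.range (n + q + 1), T i m * h m = ∑ m ∈ Finset.range (i + q + 1), T i m * h m := by
    intro i hi
    simp only [Finset.mem_range] at hi
    symm
    refine Finset.sum_subset (Finset.range_subset_range.2 (by omega)) ?_
    intro m hm hm2
    simp only [Finset.mem_range] at hm hm2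
    rw [hT i m (Or.inr (by omega)), zero_mul]
  have hFp : ∀ i ∈ Finset.range (n + 1),
      ∑ m ∈ Finset.range (n + p + 1), (f m - g m) * T m i = x * f i - y * g i := by
    intro i hi
    have h1 := (ext f i hi).trans (hf i)
    have h2 := (ext g i hi).trans (hg i)
    calc ∑ m ∈ Finset.range (n + p + 1), (f m - g m) * T m i
        = (∑ m ∈ Finset.range (n + p + 1), f m * T m i)
          - ∑ m ∈ Finset.range (n + p + 1), g m * T m i := by
          rw [← Finset.sum_sub_distrib]
          exact Finset.sum_congr rfl fun m _ => by ring
      _ = x * f i - y * g i := by rw [h1, h2]; ring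
  have hFq : ∀ i ∈ Finset.range (n + 1),
      ∑ m ∈ Finset.range (n + q + 1), T i m * h m = y * h i := fun i hi =>
    (extq i hi).trans (hh i)
  have split : ∀ (k : ℕ) (φ : ℕ → ℂ),
      ∑ m ∈ Finset.range (n + k + 1), φ m
        = (∑ m ∈ Finset.range (n + 1), φ m) + ∑ m ∈ Finset.Icc (n + 1) (n + k), φ m := by
    intro k φ
    rw [Finset.range_eq_Ico, ← Finset.Ico_add_one_right_eq_Icc, Finset.range_eq_Ico,
      Finset.sum_Ico_consecutive φ (Nat.zero_le (n + 1)) (by omega : n + 1 ≤ n + k + 1)]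
  calc (x - y) * ∑ i ∈ Finset.range (n + 1), f i * h i
      = ∑ i ∈ Finset.range (n + 1),
          ((∑ m ∈ Finset.range (n + p + 1), (f m - g m) * T m i) * h i
            - (f i - g i) * ∑ m ∈ Finset.range (n + q + 1), T i m * h m) := by
        rw [Finset.mul_sum]
        refine Finset.sum_congr rfl fun i hi => ?_
        rw [hFp i hi, hFq i hi]; ring
    _ = (∑ i ∈ Finset.range (n + 1), ∑ m ∈ Finset.range (n + p + 1), (f m - g m) * T m i * h i)
        - ∑ i ∈ Finset.range (n + 1), ∑ m ∈ Finset.range (n + q + 1), (f i - g i) * T i m * h m := by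
        rw [← Finset.sum_sub_distrib]
        refine Finset.sum_congr rfl fun i _ => ?_
        rw [Finset.sum_mul, Finset.mul_sum]
        congr 1
        exact Finset.sum_congr rfl fun m _ => by ring
    _ = ((∑ i ∈ Finset.range (n + 1), ∑ m ∈ Finset.range (n + 1), (f m - g m) * T m i * h i)
          + ∑ i ∈ Finset.range (n + 1), ∑ m ∈ Finset.Icc (n + 1) (n + p), (f m - g m) * T m i * h i)
        - ((∑ i ∈ Finset.range (n + 1), ∑ m ∈ Finset.range (n + 1), (f i - g i) * T i m * h m)
          + ∑ i ∈ Finset.range (n + 1), ∑ m ∈ Finset.Icc (n + 1) (n + q), (f i - g i) * T i m * h m) := by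
        rw [← Finset.sum_add_distrib, ← Finset.sum_add_distrib]
        congr 1 <;> exact Finset.sum_congr rfl fun i _ => split _ _
    _ = (∑ i ∈ Finset.range (n + 1), ∑ m ∈ Finset.Icc (n + 1) (n + p), (f m - g m) * T m i * h i)
        - ∑ i ∈ Finset.range (n + 1), ∑ m ∈ Finset.Icc (n + 1) (n + q), (f i - g i) * T i m * h m := by
        rw [Finset.sum_comm (f := fun i m => (f m - g m) * T m i * h i)]
        ring
    _ = (∑ i ∈ Finset.Icc (n + 1) (n + p), ∑ j ∈ Finset.range (n + 1),
          (f i - g i) * T i j * h j)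
        - ∑ i ∈ Finset.range (n + 1), ∑ j ∈ Finset.Icc (n + 1) (n + q),
          (f i - g i) * T i j * h j := by
        rw [Finset.sum_comm (f := fun i m => (f m - g m) * T m i * h i)]

/-- mixed Christoffel–Darboux formulas for the kernels built from
the Cauchy transforms `C_n`, `D_n` of the vector polynomial sequences `A_n`,
`B_n` satisfying the banded recurrence relations. -/
theorem christoffel_darboux_mixed_cauchy
    (p q : ℕ) (hp : 0 < p) (hq : 0 < q)
    (Δ : Set ℝ) (hΔ : IsCompact Δ)
    (μ : Fin q → Fin p → Measure ℝ)
    (hμfin : ∀ b a, IsFiniteMeasure (μ b a))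
    (hμsupp : ∀ b a, (μ b a) Δᶜ = 0)
    (T : ℕ → ℕ → ℂ)
    (hT : ∀ n m : ℕ, (m + p < n ∨ n + q < m) → T n m = 0)
    (A : ℕ → ℂ → Fin p → ℂ) (B : ℕ → ℂ → Fin q → ℂ)
    (hApoly : ∀ n a, ∃ P : Polynomial ℂ, ∀ x, A n x a = P.eval x)
    (hBpoly : ∀ n b, ∃ P : Polynomial ℂ, ∀ y, B n y b = P.eval y)
    (hA : ∀ (n : ℕ) (x : ℂ) (a : Fin p),
      ∑ m ∈ Finset.range (n + p + 1), A m x a * T m n = x * A n x a)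
    (hB : ∀ (n : ℕ) (y : ℂ) (b : Fin q),
      ∑ m ∈ Finset.range (n + q + 1), T n m * B m y b = y * B n y b)
    (C : ℕ → ℂ → Fin q → ℂ)
    (hC : ∀ (n : ℕ) (z : ℂ) (b : Fin q),
      C n z b = ∑ a : Fin p, ∫ t : ℝ, A n (t : ℂ) a / (z - (t : ℂ)) ∂(μ b a))
    (D : ℕ → ℂ → Fin p → ℂ)
    (hD : ∀ (n : ℕ) (z : ℂ) (a : Fin p),
      D n z a = ∑ b : Fin q, ∫ t : ℝ, B n (t : ℂ) b / (z - (t : ℂ)) ∂(μ b a))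
    (n : ℕ) (x y : ℂ)
    (hx : ∀ t : ℝ, t ∈ Δ → x ≠ (t : ℂ)) (hy : ∀ t : ℝ, t ∈ Δ → y ≠ (t : ℂ)) :
    (∀ (b b' : Fin q),
      (x - y) * ∑ i ∈ Finset.range (n + 1), C i x b * B i y b' =
        (∑ i ∈ Finset.Icc (n + 1) (n + p), ∑ j ∈ Finset.range (n + 1),
          (C i x b - C i y b) * T i j * B j y b') -
        (∑ i ∈ Finset.range (n + 1), ∑ j ∈ Finset.Icc (n + 1) (n + q),
          (C i x b - C i y b) * T i j * B j y b')) ∧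
    (∀ (a a' : Fin p),
      (x - y) * ∑ i ∈ Finset.range (n + 1), A i x a * D i y a' =
        (∑ i ∈ Finset.range (n + 1), ∑ j ∈ Finset.Icc (n + 1) (n + q),
          A i x a * T i j * (D j x a' - D j y a')) -
        (∑ i ∈ Finset.Icc (n + 1) (n + p), ∑ j ∈ Finset.range (n + 1),
          A i x a * T i j * (D j x a' - D j y a'))) := by
  -- recurrence for the Cauchy transforms C
  have hCrec : ∀ (z : ℂ), (∀ t : ℝ, t ∈ Δ → z ≠ (t : ℂ)) → ∀ (i : ℕ) (b : Fin q),
      ∑ m ∈ Finset.range (i + p + 1), C m z b * T m i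
        = z * C i z b - ∑ a : Fin p, ∫ t : ℝ, A i (t : ℂ) a ∂(μ b a) := by
    intro z hz i b
    calc ∑ m ∈ Finset.range (i + p + 1), C m z b * T m i
        = ∑ m ∈ Finset.range (i + p + 1), ∑ a : Fin p,
            (∫ t : ℝ, A m (t : ℂ) a / (z - (t : ℂ)) ∂(μ b a)) * T m i := by
          refine Finset.sum_congr rfl fun m _ => ?_
          rw [hC m z b, Finset.sum_mul]
      _ = ∑ a : Fin p, ∑ m ∈ Finset.range (i + p + 1),
            (∫ t : ℝ, A m (t : ℂ) a / (z - (t : ℂ)) ∂(μ b a)) * T m i := Finset.sum_comm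
      _ = ∑ a : Fin p, (z * (∫ t : ℝ, A i (t : ℂ) a / (z - (t : ℂ)) ∂(μ b a))
            - ∫ t : ℝ, A i (t : ℂ) a ∂(μ b a)) := by
          refine Finset.sum_congr rfl fun a _ => ?_
          haveI := hμfin b a
          exact my_cauchy_rec Δ hΔ (μ b a) (hμsupp b a) z hz (i + p + 1)
            (fun m t => A m (t : ℂ) a)
            (fun m => (hApoly m a).elim fun P hP => ⟨P, fun t => hP (t : ℂ)⟩)
            (fun m => T m i) (fun t => A i (t : ℂ) a)
            ((hApoly i a).elim fun P hP => ⟨P, fun t => hP (t : ℂ)⟩)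
            (fun t => hA i (t : ℂ) a)
      _ = z * C i z b - ∑ a : Fin p, ∫ t : ℝ, A i (t : ℂ) a ∂(μ b a) := by
          rw [Finset.sum_sub_distrib, ← Finset.mul_sum, ← hC i z b]
  -- recurrence for the Cauchy transforms D
  have hDrec : ∀ (z : ℂ), (∀ t : ℝ, t ∈ Δ → z ≠ (t : ℂ)) → ∀ (j : ℕ) (a' : Fin p),
      ∑ m ∈ Finset.range (j + q + 1), D m z a' * T j m
        = z * D j z a' - ∑ b : Fin q, ∫ t : ℝ, B j (t : ℂ) b ∂(μ b a') := by
    intro z hz j a'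
    calc ∑ m ∈ Finset.range (j + q + 1), D m z a' * T j m
        = ∑ m ∈ Finset.range (j + q + 1), ∑ b : Fin q,
            (∫ t : ℝ, B m (t : ℂ) b / (z - (t : ℂ)) ∂(μ b a')) * T j m := by
          refine Finset.sum_congr rfl fun m _ => ?_
          rw [hD m z a', Finset.sum_mul]
      _ = ∑ b : Fin q, ∑ m ∈ Finset.range (j + q + 1),
            (∫ t : ℝ, B m (t : ℂ) b / (z - (t : ℂ)) ∂(μ b a')) * T j m := Finset.sum_comm
      _ = ∑ b : Fin q, (z * (∫ t : ℝ, B j (t : ℂ) b / (z - (t : ℂ)) ∂(μ b a'))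
            - ∫ t : ℝ, B j (t : ℂ) b ∂(μ b a')) := by
          refine Finset.sum_congr rfl fun b _ => ?_
          haveI := hμfin b a'
          refine my_cauchy_rec Δ hΔ (μ b a') (hμsupp b a') z hz (j + q + 1)
            (fun m t => B m (t : ℂ) b)
            (fun m => (hBpoly m b).elim fun P hP => ⟨P, fun t => hP (t : ℂ)⟩)
            (fun m => T j m) (fun t => B j (t : ℂ) b)
            ((hBpoly j b).elim fun P hP => ⟨P, fun t => hP (t : ℂ)⟩)
            (fun t => ?_)
          calc ∑ m ∈ Finset.range (j + q + 1), B m (t : ℂ) b * T j m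
              = ∑ m ∈ Finset.range (j + q + 1), T j m * B m (t : ℂ) b :=
                Finset.sum_congr rfl fun m _ => mul_comm _ _
            _ = (t : ℂ) * B j (t : ℂ) b := hB j (t : ℂ) b
      _ = z * D j z a' - ∑ b : Fin q, ∫ t : ℝ, B j (t : ℂ) b ∂(μ b a') := by
          rw [Finset.sum_sub_distrib, ← Finset.mul_sum, ← hD j z a']
  refine ⟨fun b b' => ?_, fun a a' => ?_⟩
  · exact my_cd_alg p q T hT (fun i => C i x b) (fun i => C i y b) (fun j => B j y b') x y
      (fun i => ∑ a : Fin p, ∫ t : ℝ, A i (t : ℂ) a ∂(μ b a))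
      (fun i => hCrec x hx i b) (fun i => hCrec y hy i b) (fun i => hB i y b') n
  · have hT' : ∀ n m : ℕ, (m + q < n ∨ n + p < m) → T m n = 0 := fun n m hnm =>
      hT m n hnm.symm
    have hh' : ∀ i, ∑ m ∈ Finset.range (i + p + 1), T m i * A m x a = x * A i x a := by
      intro i
      calc ∑ m ∈ Finset.range (i + p + 1), T m i * A m x a
          = ∑ m ∈ Finset.range (i + p + 1), A m x a * T m i :=
            Finset.sum_congr rfl fun m _ => mul_comm _ _
        _ = x * A i x a := hA i x a
    have halg := my_cd_alg q p (fun i j => T j i) hT'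
      (fun j => D j y a') (fun j => D j x a') (fun i => A i x a) y x
      (fun j => ∑ b : Fin q, ∫ t : ℝ, B j (t : ℂ) b ∂(μ b a'))
      (fun j => hDrec y hy j a') (fun j => hDrec x hx j a') hh' n
    have e1 : ∑ i ∈ Finset.range (n + 1), A i x a * D i y a'
        = ∑ i ∈ Finset.range (n + 1), D i y a' * A i x a :=
      Finset.sum_congr rfl fun i _ => mul_comm _ _
    have e2 : ∑ i ∈ Finset.range (n + 1), ∑ j ∈ Finset.Icc (n + 1) (n + q),
          A i x a * T i j * (D j x a' - D j y a')
        = -∑ i ∈ Finset.Icc (n + 1) (n + q), ∑ j ∈ Finset.range (n + 1),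
            (D i y a' - D i x a') * T j i * A j x a := by
      rw [Finset.sum_comm, ← Finset.sum_neg_distrib]
      refine Finset.sum_congr rfl fun i _ => ?_
      rw [← Finset.sum_neg_distrib]
      exact Finset.sum_congr rfl fun j _ => by ring
    have e3 : ∑ i ∈ Finset.Icc (n + 1) (n + p), ∑ j ∈ Finset.range (n + 1),
          A i x a * T i j * (D j x a' - D j y a')
        = -∑ i ∈ Finset.range (n + 1), ∑ j ∈ Finset.Icc (n + 1) (n + p),
            (D i y a' - D i x a') * T j i * A j x a := by
      rw [Finset.sum_comm, ← Finset.sum_neg_distrib]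
      refine Finset.sum_congr rfl fun i _ => ?_
      rw [← Finset.sum_neg_distrib]
      exact Finset.sum_congr rfl fun j _ => by ring
    rw [e1, e2, e3]
    linear_combination -halg
end

section
/- Let x_1, …, x_M ∈ ℂ be pairwise distinct. For each i ∈ {1,…,M} let s_i ≥ 1 and, for j ∈ {1,…,s_i}, let κ_{i,j} ≥ 1, let v_{i,j;l} ∈ ℂ^p (0 ≤ l ≤ κ_{i,j}−1) be vectors such that, for each fixed i, the vectors v_{i,1;0}, …, v_{i,s_i;0} are linearly independent, let K_{i,j} : ℂ → ℂ^p be vector polynomial functions, and let c_{i,j} ∈ ℂ. If Σ_{i=1}^M Σ_{j=1}^{s_i} c_{i,j} · ( K_{i,j}(z) + Σ_{l=0}^{κ_{i,j}−1} v_{i,j;κ_{i,j}−1−l}/(z − x_i)^{l+1} ) = 0 for every z ∈ ℂ ∖ {x_1,…,x_M}, then c_{i,j} = 0 for all i, j. -/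
open Filter Topology Finset

private lemma core_residue
    {p M : ℕ}
    (x : Fin M → ℂ) (hx : Function.Injective x)
    {s : Fin M → ℕ}
    (κ : (i : Fin M) → Fin (s i) → ℕ)
    (v : (i : Fin M) → Fin (s i) → ℕ → Fin p → ℂ)
    (K : (i : Fin M) → Fin (s i) → ℂ → Fin p → ℂ)
    (hK : ∀ i j a, ∃ P : Polynomial ℂ, ∀ z, K i j z a = P.eval z)
    (c : (i : Fin M) → Fin (s i) → ℂ)
    (h : ∀ z : ℂ, (∀ i, z ≠ x i) → ∀ a : Fin p,
      ∑ i : Fin M, ∑ j : Fin (s i),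
        c i j * (K i j z a +
          ∑ l ∈ Finset.range (κ i j),
            v i j (κ i j - 1 - l) a / (z - x i) ^ (l + 1)) = 0)
    (i : Fin M) (n : ℕ) (hn : 1 ≤ n)
    (hsmall : ∀ j, κ i j ≤ n ∨ c i j = 0) (a : Fin p) :
    ∑ j : Fin (s i), (if κ i j = n then c i j * v i j 0 a else 0) = 0 := by
  classical
  set F : ℂ → ℂ := fun z => ∑ i' : Fin M, ∑ j : Fin (s i'),
      c i' j * ((z - x i) ^ n * K i' j z a +
        ∑ l ∈ Finset.range (κ i' j),
          v i' j (κ i' j - 1 - l) a * ((z - x i) ^ n / (z - x i') ^ (l + 1))) with hF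
  -- eventually all z ≠ x i'
  have hne : ∀ᶠ z in 𝓝[≠] (x i), ∀ i', z ≠ x i' := by
    refine eventually_all.mpr fun i' => ?_
    by_cases hii : i' = i
    · subst hii; exact eventually_mem_nhdsWithin
    · exact (eventually_ne_nhds (hx.ne (Ne.symm hii) : x i ≠ x i')).filter_mono
        nhdsWithin_le_nhds
  -- F is eventually 0
  have hF0 : ∀ᶠ z in 𝓝[≠] (x i), F z = 0 := by
    filter_upwards [hne] with z hz
    have : F z = (z - x i) ^ n *
        (∑ i' : Fin M, ∑ j : Fin (s i'),
          c i' j * (K i' j z a +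
            ∑ l ∈ Finset.range (κ i' j),
              v i' j (κ i' j - 1 - l) a / (z - x i') ^ (l + 1))) := by
      rw [hF, Finset.mul_sum]
      refine Finset.sum_congr rfl fun i' _ => ?_
      rw [Finset.mul_sum]
      refine Finset.sum_congr rfl fun j _ => ?_
      have hterm : (∑ l ∈ Finset.range (κ i' j),
          v i' j (κ i' j - 1 - l) a * ((z - x i) ^ n / (z - x i') ^ (l + 1)))
          = (z - x i) ^ n * ∑ l ∈ Finset.range (κ i' j),
              v i' j (κ i' j - 1 - l) a / (z - x i') ^ (l + 1) := by
        rw [Finset.mul_sum]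
        exact Finset.sum_congr rfl fun l _ => by ring
      rw [hterm]
      ring
    rw [this, h z hz a, mul_zero]
  have hFlim0 : Tendsto F (𝓝[≠] (x i)) (𝓝 0) :=
    tendsto_const_nhds.congr' (hF0.mono fun z hz => hz.symm)
  -- the ratio limit lemma
  have hpow : ∀ l : ℕ, l + 1 ≤ n →
      Tendsto (fun z : ℂ => (z - x i) ^ n / (z - x i) ^ (l + 1)) (𝓝[≠] (x i))
        (𝓝 (if l + 1 = n then 1 else 0)) := by
    intro l hl
    have heq : ∀ᶠ z in 𝓝[≠] (x i),
        (z - x i) ^ (n - (l + 1)) = (z - x i) ^ n / (z - x i) ^ (l + 1) := by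
      filter_upwards [eventually_mem_nhdsWithin] with z hz
      exact pow_sub₀ _ (sub_ne_zero.mpr hz) hl
    have h1 : Tendsto (fun z : ℂ => (z - x i) ^ (n - (l + 1))) (𝓝 (x i))
        (𝓝 ((x i - x i) ^ (n - (l + 1)))) :=
      ((continuous_id.sub continuous_const).pow _).tendsto _
    have hval : (x i - x i) ^ (n - (l + 1)) = if l + 1 = n then 1 else 0 := by
      rw [sub_self]
      by_cases hc : l + 1 = n
      · simp [hc]
      · rw [if_neg hc, zero_pow (by omega)]
    rw [← hval]
    exact Tendsto.congr' heq (h1.mono_left nhdsWithin_le_nhds)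
  -- polynomial part tends to 0
  have hKlim : ∀ (i' : Fin M) (j : Fin (s i')),
      Tendsto (fun z : ℂ => (z - x i) ^ n * K i' j z a) (𝓝[≠] (x i)) (𝓝 0) := by
    intro i' j
    obtain ⟨P, hP⟩ := hK i' j a
    have h1 : Tendsto (fun z : ℂ => (z - x i) ^ n * P.eval z) (𝓝 (x i))
        (𝓝 ((x i - x i) ^ n * P.eval (x i))) :=
      (((continuous_id.sub continuous_const).pow _).mul P.continuous).tendsto _
    have : (x i - x i) ^ n * P.eval (x i) = 0 := by
      rw [sub_self, zero_pow (by omega), zero_mul]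
    rw [this] at h1
    exact (h1.mono_left nhdsWithin_le_nhds).congr (fun z => by rw [hP])
  -- part at i tends to the target sum
  have hG : Tendsto (fun z => ∑ j : Fin (s i),
      c i j * ((z - x i) ^ n * K i j z a +
        ∑ l ∈ Finset.range (κ i j),
          v i j (κ i j - 1 - l) a * ((z - x i) ^ n / (z - x i) ^ (l + 1))))
      (𝓝[≠] (x i)) (𝓝 (∑ j : Fin (s i), (if κ i j = n then c i j * v i j 0 a else 0))) := by
    refine tendsto_finset_sum _ fun j _ => ?_
    rcases hsmall j with hle | hc0
    · -- κ i j ≤ n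
      have hsum : Tendsto (fun z => ∑ l ∈ Finset.range (κ i j),
          v i j (κ i j - 1 - l) a * ((z - x i) ^ n / (z - x i) ^ (l + 1)))
          (𝓝[≠] (x i))
          (𝓝 (∑ l ∈ Finset.range (κ i j),
            v i j (κ i j - 1 - l) a * (if l + 1 = n then 1 else 0))) := by
        refine tendsto_finset_sum _ fun l hl => ?_
        exact (hpow l (by simp only [Finset.mem_range] at hl; omega)).const_mul _
      have hval : ∑ l ∈ Finset.range (κ i j),
          v i j (κ i j - 1 - l) a * (if l + 1 = n then 1 else 0)
          = (if κ i j = n then v i j 0 a else 0) := by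
        have : ∀ l, v i j (κ i j - 1 - l) a * (if l + 1 = n then 1 else 0)
            = (if l = n - 1 then v i j (κ i j - 1 - l) a else 0) := by
          intro l
          by_cases hc : l + 1 = n
          · rw [if_pos hc, if_pos (by omega), mul_one]
          · rw [if_neg hc, if_neg (by omega), mul_zero]
        rw [Finset.sum_congr rfl fun l _ => this l, Finset.sum_ite_eq' (Finset.range (κ i j))]
        by_cases hc : κ i j = n
        · rw [if_pos (by simp [Finset.mem_range]; omega), if_pos hc]
          congr 1
          omega
        · rw [if_neg (by simp [Finset.mem_range]; omega), if_neg hc]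
      have hthis := ((hKlim i j).add hsum).const_mul (c i j)
      rw [zero_add, hval] at hthis
      have heq : (if κ i j = n then c i j * v i j 0 a else 0)
          = c i j * (if κ i j = n then v i j 0 a else 0) := by
        by_cases hc : κ i j = n <;> simp [hc]
      rw [heq]
      exact hthis
    · -- c i j = 0
      have : (if κ i j = n then c i j * v i j 0 a else 0) = 0 := by
        by_cases hc : κ i j = n <;> simp [hc, hc0]
      rw [this]
      simp only [hc0, zero_mul]
      exact tendsto_const_nhds
  -- parts at i' ≠ i tend to 0
  have hH : Tendsto (fun z => ∑ i' ∈ Finset.univ.erase i, ∑ j : Fin (s i'),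
      c i' j * ((z - x i) ^ n * K i' j z a +
        ∑ l ∈ Finset.range (κ i' j),
          v i' j (κ i' j - 1 - l) a * ((z - x i) ^ n / (z - x i') ^ (l + 1))))
      (𝓝[≠] (x i)) (𝓝 0) := by
    have : Tendsto (fun z => ∑ i' ∈ Finset.univ.erase i, ∑ j : Fin (s i'),
        c i' j * ((z - x i) ^ n * K i' j z a +
          ∑ l ∈ Finset.range (κ i' j),
            v i' j (κ i' j - 1 - l) a * ((z - x i) ^ n / (z - x i') ^ (l + 1))))
        (𝓝[≠] (x i))
        (𝓝 (∑ i' ∈ Finset.univ.erase i, ∑ j : Fin (s i'), (0 : ℂ))) := by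
      refine tendsto_finset_sum _ fun i' hi' => tendsto_finset_sum _ fun j _ => ?_
      have hxne : x i - x i' ≠ 0 :=
        sub_ne_zero.mpr (hx.ne (Finset.ne_of_mem_erase hi').symm)
      have hratio : ∀ l : ℕ, Tendsto (fun z : ℂ => (z - x i) ^ n / (z - x i') ^ (l + 1))
          (𝓝[≠] (x i)) (𝓝 0) := by
        intro l
        have h1 : Tendsto (fun z : ℂ => (z - x i) ^ n / (z - x i') ^ (l + 1)) (𝓝 (x i))
            (𝓝 ((x i - x i) ^ n / (x i - x i') ^ (l + 1))) :=
          Tendsto.div (((continuous_id.sub continuous_const).pow _).tendsto _)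
            (((continuous_id.sub continuous_const).pow _).tendsto _)
            (pow_ne_zero _ hxne)
        have : (x i - x i) ^ n / (x i - x i') ^ (l + 1) = 0 := by
          rw [sub_self, zero_pow (by omega), zero_div]
        rw [this] at h1
        exact h1.mono_left nhdsWithin_le_nhds
      have hsum : Tendsto (fun z => ∑ l ∈ Finset.range (κ i' j),
          v i' j (κ i' j - 1 - l) a * ((z - x i) ^ n / (z - x i') ^ (l + 1)))
          (𝓝[≠] (x i)) (𝓝 0) := by
        have := tendsto_finset_sum (Finset.range (κ i' j))
          (fun l _ => (hratio l).const_mul (v i' j (κ i' j - 1 - l) a))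
        simpa using this
      have := ((hKlim i' j).add hsum).const_mul (c i' j)
      simpa using this
    simpa using this
  -- combine
  have hcomb : Tendsto F (𝓝[≠] (x i))
      (𝓝 ((∑ j : Fin (s i), (if κ i j = n then c i j * v i j 0 a else 0)) + 0)) := by
    have hGH := hG.add hH
    refine hGH.congr fun z => ?_
    exact Finset.add_sum_erase _ (fun i' => ∑ j : Fin (s i'),
      c i' j * ((z - x i) ^ n * K i' j z a +
        ∑ l ∈ Finset.range (κ i' j),
          v i' j (κ i' j - 1 - l) a * ((z - x i) ^ n / (z - x i') ^ (l + 1))))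
      (Finset.mem_univ i)
  rw [add_zero] at hcomb
  exact (tendsto_nhds_unique hcomb hFlim0)

/-- residue argument, higher order poles / Jordan chains: if
`x_1,…,x_M` are pairwise distinct, for each `i` the leading Jordan vectors
`v_{i,1;0},…,v_{i,s_i;0}` are linearly independent, the `K_{i,j}` are vector
polynomial functions, and
`Σ_i Σ_j c_{i,j} (K_{i,j}(z) + Σ_{l=0}^{κ_{i,j}-1} v_{i,j;κ_{i,j}-1-l}/(z-x_i)^{l+1}) = 0`
for all `z ∉ {x_1,…,x_M}`, then all `c_{i,j} = 0`. -/
theorem residue_argument_multiple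
    (p M : ℕ) (hp : 0 < p) (hM : 0 < M)
    (x : Fin M → ℂ) (hx : Function.Injective x)
    (s : Fin M → ℕ) (hs : ∀ i, 0 < s i)
    (κ : (i : Fin M) → Fin (s i) → ℕ) (hκ : ∀ i j, 0 < κ i j)
    (v : (i : Fin M) → Fin (s i) → ℕ → Fin p → ℂ)
    (hlin : ∀ i, LinearIndependent ℂ (fun j : Fin (s i) => v i j 0))
    (K : (i : Fin M) → Fin (s i) → ℂ → Fin p → ℂ)
    (hK : ∀ i j a, ∃ P : Polynomial ℂ, ∀ z, K i j z a = P.eval z)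
    (c : (i : Fin M) → Fin (s i) → ℂ)
    (h : ∀ z : ℂ, (∀ i, z ≠ x i) → ∀ a : Fin p,
      ∑ i : Fin M, ∑ j : Fin (s i),
        c i j * (K i j z a +
          ∑ l ∈ Finset.range (κ i j),
            v i j (κ i j - 1 - l) a / (z - x i) ^ (l + 1)) = 0) :
    ∀ i j, c i j = 0 := by
  classical
  intro i j
  set N := Finset.univ.sup (κ i) with hN
  have key : ∀ k : ℕ, ∀ j' : Fin (s i), N < κ i j' + k → c i j' = 0 := by
    intro k
    induction k with
    | zero =>
      intro j' hjk
      exact absurd (Finset.le_sup (Finset.mem_univ j') : κ i j' ≤ N) (by omega)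
    | succ k ih =>
      intro j' hjk
      by_cases hcase : N < κ i j' + k
      · exact ih j' hcase
      · set n := κ i j' with hn
        have hn1 : 1 ≤ n := hκ i j'
        have hsmall : ∀ j'', κ i j'' ≤ n ∨ c i j'' = 0 := by
          intro j''
          by_cases hle : κ i j'' ≤ n
          · exact Or.inl hle
          · exact Or.inr (ih j'' (by omega))
        have hsum := fun a => core_residue x hx κ v K hK c h i n hn1 hsmall a
        have hg0 : ∑ j'' : Fin (s i),
            (if κ i j'' = n then c i j'' else 0) • (v i j'' 0) = 0 := by
          funext a
          simp only [Finset.sum_apply, Pi.smul_apply, smul_eq_mul, Pi.zero_apply]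
          rw [show (∑ j'' : Fin (s i), (if κ i j'' = n then c i j'' else 0) * v i j'' 0 a)
              = ∑ j'' : Fin (s i), (if κ i j'' = n then c i j'' * v i j'' 0 a else 0) from
              Finset.sum_congr rfl fun j'' _ => by by_cases hc : κ i j'' = n <;> simp [hc]]
          exact hsum a
        have hg := Fintype.linearIndependent_iff.mp (hlin i)
          (fun j'' => if κ i j'' = n then c i j'' else 0) hg0 j'
        simpa [hn] using hg
  have hle : κ i j ≤ N := Finset.le_sup (Finset.mem_univ j)
  exact key (N + 1 - κ i j) j (by have := hκ i j; omega)
end
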